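/- (Conditional variance of the DR-learner pseudo-outcome; Table 1, row 2) Let Z = (Y, X, A) with A ∈ {0,1}, π(X) = Pr(A = 1 | X) ∈ (0,1), κ(X) = 1 − π(X), ν(X) = π(X)κ(X), μ_a(X) = E(Y | X, A = a). If Var(Y | A, X) = σ² is constant, then Var( μ₁(X) − μ₀(X) + (A − π(X))/(π(X)κ(X)) · (Y − μ_A(X)) | X ) = σ² / ν(X) = σ² · κ(X)^{−1} π(X)^{−1}. -/

import Mathlib

/-!
Write the pseudo-outcome as `f = c + w e` with `c = μ₁(X) - μ₀(X)`, `w = (A - π(X)) / ν(X)` and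
`e = Y - μ_A(X)`. Given `(X, A)`, the residual `e` has mean `0` and second moment `σ²`, while `c`
is `X`-measurable and `w` is `(X, A)`-measurable. Hence `E(f | X) = c`, and by the tower property
`Var(f | X) = E(σ² w² | X)`. As `A ∈ {0, 1}`, `w² = A / π² + (1 - A) / κ²`, whose conditional
expectation given `X` is `1 / π + 1 / κ = 1 / ν`.
-/

open MeasureTheory ProbabilityTheory Filter Set

noncomputable section

section

variable {Ω : Type*} {m n m0 : MeasurableSpace Ω} {μ : Measure Ω}

theorem condExp_sub_eq_zero_of_condExp_ae_eq {E : Type*} [NormedAddCommGroup E]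
    [NormedSpace ℝ E] [CompleteSpace E] (hm : m ≤ m0) [SigmaFinite (μ.trim hm)] {Y g : Ω → E}
    (hY : Integrable Y μ) (hg : μ[Y | m] =ᵐ[μ] g) :
    μ[Y - g | m] =ᵐ[μ] 0 := by
  have hg_cond : μ[g | m] =ᵐ[μ] μ[Y | m] :=
    (condExp_congr_ae hg.symm).trans (condExp_condExp_of_le le_rfl hm)
  filter_upwards [condExp_sub hY (integrable_condExp.congr hg) m, hg_cond] with ω hsub hgω
  simp [hsub, hgω]

theorem condExp_mul_eq_zero_of_condExp_eq_zero (hmn : m ≤ n) (hn : n ≤ m0)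
    [SigmaFinite (μ.trim hn)] {w e : Ω → ℝ} (hw : StronglyMeasurable[n] w)
    (hwe : Integrable (w * e) μ) (he : Integrable e μ) (he0 : μ[e | n] =ᵐ[μ] 0) :
    μ[w * e | m] =ᵐ[μ] 0 := by
  have hwe_n : μ[w * e | n] =ᵐ[μ] 0 := by
    filter_upwards [condExp_mul_of_stronglyMeasurable_left hw hwe he, he0] with ω h h0
    simp [h, h0]
  calc μ[w * e | m] =ᵐ[μ] μ[μ[w * e | n] | m] := (condExp_condExp_of_le hmn hn).symm
    _ =ᵐ[μ] μ[0 | m] := condExp_congr_ae hwe_n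
    _ = 0 := condExp_zero

/-- `c` need not be integrable, so the conditional expectation is computed on the
`m`-measurable sets `{‖c‖ ≤ N}`, which exhaust `Ω`. -/
theorem condExp_add_mul_eq_of_condExp_eq_zero [IsFiniteMeasure μ] (hmn : m ≤ n) (hn : n ≤ m0)
    {c w e : Ω → ℝ} (hc : StronglyMeasurable[m] c) (hw : StronglyMeasurable[n] w)
    (he : Integrable e μ) (he0 : μ[e | n] =ᵐ[μ] 0) (hf : Integrable (c + w * e) μ) :
    μ[c + w * e | m] =ᵐ[μ] c := by
  have hm : m ≤ m0 := hmn.trans hn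
  have hloc : ∀ N : ℕ, {ω | ‖c ω‖ ≤ N}.indicator (μ[c + w * e | m])
      =ᵐ[μ] {ω | ‖c ω‖ ≤ N}.indicator c := by
    intro N
    set s := {ω | ‖c ω‖ ≤ N}
    have hs : MeasurableSet[m] s := hc.norm.measurableSet_le stronglyMeasurable_const
    have hcs : Integrable (s.indicator c) μ := by
      refine Integrable.of_bound ((hc.mono hm).indicator (hm s hs)).aestronglyMeasurable N
        (ae_of_all _ fun ω => ?_)
      by_cases hω : ω ∈ s
      · rw [indicator_of_mem hω]
        exact hω
      · simp [hω]
    have hs_split : s.indicator (c + w * e) = s.indicator c + s.indicator w * e := by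
      ext ω
      by_cases hω : ω ∈ s <;> simp [hω]
    have hwes : Integrable (s.indicator w * e) μ := by
      have := (hf.indicator (hm s hs)).sub hcs
      rwa [hs_split, add_sub_cancel_left] at this
    have hwes0 : μ[s.indicator w * e | m] =ᵐ[μ] 0 :=
      condExp_mul_eq_zero_of_condExp_eq_zero hmn hn (hw.indicator (hmn s hs)) hwes he he0
    calc s.indicator (μ[c + w * e | m]) =ᵐ[μ] μ[s.indicator (c + w * e) | m] :=
          (condExp_indicator hf hs).symm
      _ =ᵐ[μ] μ[s.indicator c | m] + μ[s.indicator w * e | m] := by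
          rw [hs_split]; exact condExp_add hcs hwes m
      _ =ᵐ[μ] s.indicator c + 0 := by
          rw [condExp_of_stronglyMeasurable hm (hc.indicator hs) hcs]
          exact EventuallyEq.rfl.add hwes0
      _ = s.indicator c := add_zero _
  filter_upwards [ae_all_iff.2 hloc] with ω hω
  obtain ⟨N, hN⟩ := exists_nat_ge ‖c ω‖
  have hωN : ω ∈ {ω | ‖c ω‖ ≤ N} := hN
  simpa only [indicator_of_mem hωN] using hω N

theorem condExp_mul_add_mul_one_sub [IsFiniteMeasure μ] (hm : m ≤ m0) {A a b : Ω → ℝ}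
    (hA01 : ∀ ω, A ω = 0 ∨ A ω = 1) (hA : AEStronglyMeasurable A μ)
    (ha : StronglyMeasurable[m] a) (hb : StronglyMeasurable[m] b)
    (hint : Integrable (a * A + b * (1 - A)) μ) :
    μ[a * A + b * (1 - A) | m] =ᵐ[μ] a * μ[A | m] + b * (1 - μ[A | m]) := by
  have hAint : Integrable A μ :=
    Integrable.of_bound hA 1 (ae_of_all _ fun ω => by rcases hA01 ω with h | h <;> simp [h])
  have haA : Integrable (a * A) μ :=
    hint.mono ((ha.mono hm).aestronglyMeasurable.mul hA)
      (ae_of_all _ fun ω => by rcases hA01 ω with h | h <;> simp [h])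
  have hbA : Integrable (b * (1 - A)) μ :=
    hint.mono ((hb.mono hm).aestronglyMeasurable.mul (aestronglyMeasurable_const.sub hA))
      (ae_of_all _ fun ω => by rcases hA01 ω with h | h <;> simp [h])
  have h1A : μ[1 - A | m] =ᵐ[μ] 1 - μ[A | m] := by
    have := condExp_sub (integrable_const (1 : ℝ)) hAint m
    rwa [condExp_const hm] at this
  filter_upwards [condExp_add haA hbA m,
    condExp_mul_of_stronglyMeasurable_left ha haA hAint,
    condExp_mul_of_stronglyMeasurable_left hb hbA ((integrable_const 1).sub hAint), h1A]
    with ω hadd haω hbω h1Aω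
  simp_all

def ipwWeight (A p : Ω → ℝ) : Ω → ℝ := fun ω => (A ω - p ω) / (p ω * (1 - p ω))

theorem ipwWeight_sq_eq {A p : Ω → ℝ} {ω : Ω} (hA01 : A ω = 0 ∨ A ω = 1) (hp01 : p ω ∈ Ioo 0 1) :
    ipwWeight A p ω ^ 2 = A ω / p ω ^ 2 + (1 - A ω) / (1 - p ω) ^ 2 := by
  have hp : p ω ≠ 0 := hp01.1.ne'
  have hq : 1 - p ω ≠ 0 := (sub_pos.2 hp01.2).ne'
  rcases hA01 with h | h <;> simp only [ipwWeight, h] <;> field_simp <;> ring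

theorem stronglyMeasurable_ipwWeight {A p : Ω → ℝ} (hA : StronglyMeasurable[n] A)
    (hp : StronglyMeasurable[n] p) : StronglyMeasurable[n] (ipwWeight A p) :=
  ((hA.measurable.sub hp.measurable).div
    (hp.measurable.mul (measurable_const.sub hp.measurable))).stronglyMeasurable

theorem condExp_sq_ipwWeight_mul {A p e : Ω → ℝ} {σ2 : ℝ}
    (hA01 : ∀ ω, A ω = 0 ∨ A ω = 1) (hA : StronglyMeasurable[n] A)
    (hp : StronglyMeasurable[n] p) (hp01 : ∀ ω, p ω ∈ Ioo 0 1) (he : MemLp e 2 μ)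
    (he2 : μ[e ^ 2 | n] =ᵐ[μ] fun _ => σ2) (hint : Integrable ((ipwWeight A p * e) ^ 2) μ) :
    μ[(ipwWeight A p * e) ^ 2 | n]
      =ᵐ[μ] (fun ω => σ2 / p ω ^ 2) * A + (fun ω => σ2 / (1 - p ω) ^ 2) * (1 - A) := by
  rw [mul_pow] at hint ⊢
  filter_upwards [condExp_mul_of_stronglyMeasurable_left
    ((stronglyMeasurable_ipwWeight hA hp).pow 2) hint he.integrable_sq, he2]
    with ω hω hσ
  simp only [Pi.mul_apply, Pi.add_apply, Pi.sub_apply, Pi.one_apply, Pi.pow_apply, hω, hσ,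
    ipwWeight_sq_eq (hA01 ω) (hp01 ω)]
  ring

theorem condExp_sq_sub_condExp_add_ipwWeight_mul [IsFiniteMeasure μ] (hmn : m ≤ n)
    (hn : n ≤ m0) {A p c e : Ω → ℝ} {σ2 : ℝ} (hA01 : ∀ ω, A ω = 0 ∨ A ω = 1)
    (hA : StronglyMeasurable[n] A) (hp : StronglyMeasurable[m] p) (hp01 : ∀ ω, p ω ∈ Ioo 0 1)
    (hAp : μ[A | m] =ᵐ[μ] p) (hc : StronglyMeasurable[m] c) (he : MemLp e 2 μ)
    (he0 : μ[e | n] =ᵐ[μ] 0) (he2 : μ[e ^ 2 | n] =ᵐ[μ] fun _ => σ2)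
    (hf : MemLp (c + ipwWeight A p * e) 2 μ) :
    μ[(c + ipwWeight A p * e - μ[c + ipwWeight A p * e | m]) ^ 2 | m]
      =ᵐ[μ] fun ω => σ2 / (p ω * (1 - p ω)) := by
  set w := ipwWeight A p
  set a : Ω → ℝ := fun ω => σ2 / p ω ^ 2
  set b : Ω → ℝ := fun ω => σ2 / (1 - p ω) ^ 2
  have hw : StronglyMeasurable[n] w := stronglyMeasurable_ipwWeight hA (hp.mono hmn)
  have hmean : μ[c + w * e | m] =ᵐ[μ] c :=
    condExp_add_mul_eq_of_condExp_eq_zero hmn hn hc hw (he.integrable one_le_two) he0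
      (hf.integrable one_le_two)
  have hsq : (c + w * e - μ[c + w * e | m]) ^ 2 =ᵐ[μ] (w * e) ^ 2 := by
    filter_upwards [hmean] with ω hω
    simp only [Pi.pow_apply, Pi.sub_apply, Pi.add_apply, hω, add_sub_cancel_left]
  have hcond_n : μ[(w * e) ^ 2 | n] =ᵐ[μ] a * A + b * (1 - A) :=
    condExp_sq_ipwWeight_mul hA01 hA (hp.mono hmn) hp01 he he2
      ((hf.sub (hf.condExp one_le_two)).integrable_sq.congr hsq)
  have ha : StronglyMeasurable[m] a :=
    (measurable_const.div (hp.measurable.pow_const 2)).stronglyMeasurable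
  have hb : StronglyMeasurable[m] b :=
    (measurable_const.div ((measurable_const.sub hp.measurable).pow_const 2)).stronglyMeasurable
  calc μ[(c + w * e - μ[c + w * e | m]) ^ 2 | m]
      =ᵐ[μ] μ[(w * e) ^ 2 | m] := condExp_congr_ae hsq
    _ =ᵐ[μ] μ[μ[(w * e) ^ 2 | n] | m] := (condExp_condExp_of_le hmn hn).symm
    _ =ᵐ[μ] μ[a * A + b * (1 - A) | m] := condExp_congr_ae hcond_n
    _ =ᵐ[μ] a * μ[A | m] + b * (1 - μ[A | m]) :=
      condExp_mul_add_mul_one_sub (hmn.trans hn) hA01 (hA.mono hn).aestronglyMeasurable ha hb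
        (integrable_condExp.congr hcond_n)
    _ =ᵐ[μ] fun ω => σ2 / (p ω * (1 - p ω)) := by
      filter_upwards [hAp] with ω hω
      have hp0 : p ω ≠ 0 := (hp01 ω).1.ne'
      have hq0 : 1 - p ω ≠ 0 := (sub_pos.2 (hp01 ω).2).ne'
      simp only [Pi.add_apply, Pi.mul_apply, Pi.sub_apply, Pi.one_apply, hω, a, b]
      field_simp
      ring

end

theorem condVar_DR_pseudo_outcome_general
    {Ω E : Type*} [MeasurableSpace Ω] [MeasurableSpace E]
    (μ : Measure Ω) [IsProbabilityMeasure μ]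
    (X : Ω → E) (A Y : Ω → ℝ)
    (hX : Measurable X) (hA : Measurable A)
    (hY2 : MemLp Y 2 μ)
    (hA01 : ∀ ω, A ω = 0 ∨ A ω = 1)
    (pi kap nu mu0 mu1 : E → ℝ)
    (hpim : Measurable pi) (hmu0m : Measurable mu0) (hmu1m : Measurable mu1)
    (hpi01 : ∀ x, pi x ∈ Set.Ioo (0 : ℝ) 1)
    (hkap : ∀ x, kap x = 1 - pi x)
    (hnu : ∀ x, nu x = pi x * kap x)
    -- π(X) = Pr(A = 1 | X)
    (hpidef : μ[A | MeasurableSpace.comap X inferInstance] =ᵐ[μ] fun ω => pi (X ω))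
    -- μ_a(X) = E(Y | X, A = a), encoded via  E(Y | X, A) = A μ₁(X) + (1 − A) μ₀(X)
    (hmudef :
      μ[Y | MeasurableSpace.comap X inferInstance ⊔ MeasurableSpace.comap A inferInstance]
        =ᵐ[μ] fun ω => A ω * mu1 (X ω) + (1 - A ω) * mu0 (X ω))
    (σ2 : ℝ)
    -- Var(Y | A, X) = σ² is constant
    (hvarY :
      μ[(fun ω => (Y ω - (A ω * mu1 (X ω) + (1 - A ω) * mu0 (X ω))) ^ 2) |
          MeasurableSpace.comap X inferInstance ⊔ MeasurableSpace.comap A inferInstance]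
        =ᵐ[μ] fun _ => σ2)
    -- square-integrability of the DR pseudo-outcome
    (hfDR2 : MemLp
        (fun ω => mu1 (X ω) - mu0 (X ω) +
          (A ω - pi (X ω)) / (pi (X ω) * kap (X ω)) *
            (Y ω - (A ω * mu1 (X ω) + (1 - A ω) * mu0 (X ω)))) 2 μ) :
    (μ[(fun ω =>
        ((mu1 (X ω) - mu0 (X ω) +
            (A ω - pi (X ω)) / (pi (X ω) * kap (X ω)) *
              (Y ω - (A ω * mu1 (X ω) + (1 - A ω) * mu0 (X ω)))) -
          (μ[(fun ω' => mu1 (X ω') - mu0 (X ω') +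
              (A ω' - pi (X ω')) / (pi (X ω') * kap (X ω')) *
                (Y ω' - (A ω' * mu1 (X ω') + (1 - A ω') * mu0 (X ω')))) |
              MeasurableSpace.comap X inferInstance]) ω) ^ 2) |
      MeasurableSpace.comap X inferInstance]
      =ᵐ[μ] fun ω => σ2 / nu (X ω))
    ∧ (∀ x, σ2 / nu x = σ2 * (kap x)⁻¹ * (pi x)⁻¹) := by
  refine ⟨?_, fun x => by
    rw [hnu, mul_comm (pi x), div_mul_eq_div_div, div_eq_mul_inv, div_eq_mul_inv]⟩
  obtain rfl : kap = fun x => 1 - pi x := funext hkap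
  obtain rfl : nu = fun x => pi x * (1 - pi x) := funext hnu
  have hn : MeasurableSpace.comap X inferInstance ⊔ MeasurableSpace.comap A inferInstance
      ≤ ‹MeasurableSpace Ω› := sup_le hX.comap_le hA.comap_le
  have hXm : Measurable[MeasurableSpace.comap X inferInstance] X := comap_measurable X
  have hAn : Measurable[MeasurableSpace.comap X inferInstance ⊔
      MeasurableSpace.comap A inferInstance] A := (comap_measurable A).mono le_sup_right le_rfl
  exact condExp_sq_sub_condExp_add_ipwWeight_mul le_sup_left hn hA01 hAn.stronglyMeasurable
    (hpim.comp hXm).stronglyMeasurable (fun ω => hpi01 (X ω)) hpidef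
    ((hmu1m.comp hXm).sub (hmu0m.comp hXm)).stronglyMeasurable
    (hY2.sub ((hY2.condExp one_le_two).ae_eq hmudef))
    (condExp_sub_eq_zero_of_condExp_ae_eq hn (hY2.integrable one_le_two) hmudef) hvarY hfDR2

/-- (Conditional variance of the DR-learner pseudo-outcome; Table 1, row 2.)
Let `Z = (Y, X, A)` with `A ∈ {0,1}`, `π(X) = Pr(A = 1 | X) ∈ (0,1)`, `κ(X) = 1 − π(X)`,
`ν(X) = π(X)κ(X)`, `μ_a(X) = E(Y | X, A = a)`.  If `Var(Y | A, X) = σ²` is constant, then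
`Var(μ₁(X) − μ₀(X) + (A − π(X))/(π(X)κ(X)) · (Y − μ_A(X)) | X) = σ²/ν(X)
  = σ² κ(X)⁻¹ π(X)⁻¹`. -/
theorem condVar_DR_pseudo_outcome
    {Ω E : Type*} [MeasurableSpace Ω] [MeasurableSpace E]
    (μ : Measure Ω) [IsProbabilityMeasure μ]
    (X : Ω → E) (A Y : Ω → ℝ)
    (hX : Measurable X) (hA : Measurable A) (hYm : Measurable Y)
    (hY2 : MemLp Y 2 μ)
    (hA01 : ∀ ω, A ω = 0 ∨ A ω = 1)
    (pi kap nu mu0 mu1 : E → ℝ)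
    (hpim : Measurable pi) (hmu0m : Measurable mu0) (hmu1m : Measurable mu1)
    (hpi01 : ∀ x, pi x ∈ Set.Ioo (0 : ℝ) 1)
    (hkap : ∀ x, kap x = 1 - pi x)
    (hnu : ∀ x, nu x = pi x * kap x)
    -- π(X) = Pr(A = 1 | X)
    (hpidef : μ[A | MeasurableSpace.comap X inferInstance] =ᵐ[μ] fun ω => pi (X ω))
    -- μ_a(X) = E(Y | X, A = a), encoded via  E(Y | X, A) = A μ₁(X) + (1 − A) μ₀(X)
    (hmudef :
      μ[Y | MeasurableSpace.comap X inferInstance ⊔ MeasurableSpace.comap A inferInstance]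
        =ᵐ[μ] fun ω => A ω * mu1 (X ω) + (1 - A ω) * mu0 (X ω))
    (σ2 : ℝ)
    -- Var(Y | A, X) = σ² is constant
    (hvarY :
      μ[(fun ω => (Y ω - (A ω * mu1 (X ω) + (1 - A ω) * mu0 (X ω))) ^ 2) |
          MeasurableSpace.comap X inferInstance ⊔ MeasurableSpace.comap A inferInstance]
        =ᵐ[μ] fun _ => σ2)
    -- square-integrability of the DR pseudo-outcome
    (hfDR2 : MemLp
        (fun ω => mu1 (X ω) - mu0 (X ω) +
          (A ω - pi (X ω)) / (pi (X ω) * kap (X ω)) *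
            (Y ω - (A ω * mu1 (X ω) + (1 - A ω) * mu0 (X ω)))) 2 μ) :
    (μ[(fun ω =>
        ((mu1 (X ω) - mu0 (X ω) +
            (A ω - pi (X ω)) / (pi (X ω) * kap (X ω)) *
              (Y ω - (A ω * mu1 (X ω) + (1 - A ω) * mu0 (X ω)))) -
          (μ[(fun ω' => mu1 (X ω') - mu0 (X ω') +
              (A ω' - pi (X ω')) / (pi (X ω') * kap (X ω')) *
                (Y ω' - (A ω' * mu1 (X ω') + (1 - A ω') * mu0 (X ω')))) |
              MeasurableSpace.comap X inferInstance]) ω) ^ 2) |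
      MeasurableSpace.comap X inferInstance]
      =ᵐ[μ] fun ω => σ2 / nu (X ω))
    ∧ (∀ x, σ2 / nu x = σ2 * (kap x)⁻¹ * (pi x)⁻¹) :=
  condVar_DR_pseudo_outcome_general μ X A Y hX hA hY2 hA01 pi kap nu mu0 mu1 hpim hmu0m hmu1m hpi01
    hkap hnu hpidef hmudef σ2 hvarY hfDR2
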